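/- For every finite graph G with max(α_M(G), ω_M(G)) = 2, p(G) = 2 if and only if G has exactly 2 isolated vertices or the complement of G has exactly 2 isolated vertices; otherwise p(G) = 1. -/

import Mathlib

/-- `M` is a module of `G`: every vertex outside `M` is adjacent to all of `M` or to none. -/
def SimpleGraph.IsModule {V : Type*} (G : SimpleGraph V) (M : Set V) : Prop :=
  ∀ v ∉ M, (∀ m ∈ M, G.Adj v m) ∨ (∀ m ∈ M, ¬ G.Adj v m)

/-- `G` is prime: at least 4 vertices and all modules are trivial. -/
def SimpleGraph.IsPrimeGraph {V : Type*} [Fintype V] (G : SimpleGraph V) : Prop :=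
  4 ≤ Fintype.card V ∧
    ∀ M : Set V, G.IsModule M → M = ∅ ∨ (∃ v, M = {v}) ∨ M = Set.univ

/-- `H` on `V ⊕ W` is an extension of `G` on `V`: it induces `G` on the `inl` copy of `V`. -/
def SimpleGraph.IsExtension {V W : Type*} (G : SimpleGraph V) (H : SimpleGraph (V ⊕ W)) : Prop :=
  ∀ u v : V, H.Adj (Sum.inl u) (Sum.inl v) ↔ G.Adj u v

/-- The prime bound of `G`: the least `p` such that `G` has a prime `p`-extension. -/
noncomputable def SimpleGraph.primeBound {V : Type*} [Fintype V] (G : SimpleGraph V) : ℕ :=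
  sInf {p : ℕ | ∃ H : SimpleGraph (V ⊕ Fin p), G.IsExtension H ∧ H.IsPrimeGraph}

/-- The modular clique number: largest size of a module of `G` that is a clique. -/
noncomputable def SimpleGraph.modularCliqueNumber {V : Type*} [Fintype V]
    (G : SimpleGraph V) : ℕ :=
  sSup {n : ℕ | ∃ M : Set V, G.IsModule M ∧ G.IsClique M ∧ M.ncard = n}

/-- The modular stability number: `ω_M` of the complement. -/
noncomputable def SimpleGraph.modularStabilityNumber {V : Type*} [Fintype V]
    (G : SimpleGraph V) : ℕ :=
  Gᶜ.modularCliqueNumber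

/-- The number of isolated vertices of `G`. -/
noncomputable def SimpleGraph.isolatedCount {V : Type*} [Fintype V] (G : SimpleGraph V) : ℕ :=
  {v : V | ∀ w, ¬ G.Adj v w}.ncard

/-- `P` is a modular partition of `G`. -/
def SimpleGraph.IsModularPartition {V : Type*} (G : SimpleGraph V) (P : Set (Set V)) : Prop :=
  (∀ X ∈ P, X.Nonempty) ∧ ⋃₀ P = Set.univ ∧ P.Pairwise Disjoint ∧ ∀ X ∈ P, G.IsModule X

/-- The quotient graph `G/P` of a (modular) partition `P`. -/
def SimpleGraph.quotientGraph {V : Type*} (G : SimpleGraph V) (P : Set (Set V)) :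
    SimpleGraph P where
  Adj X Y := (X : Set V) ≠ (Y : Set V) ∧ ∃ u ∈ (X : Set V), ∃ v ∈ (Y : Set V), G.Adj u v
  symm := by
    constructor
    rintro X Y ⟨hne, u, hu, v, hv, h⟩
    exact ⟨fun h' => hne h'.symm, v, hv, u, hu, h.symm⟩
  loopless := by
    constructor
    rintro X ⟨hne, -⟩
    exact hne rfl

/-- `M` is a strong module of `G`. -/
def SimpleGraph.IsStrongModule {V : Type*} (G : SimpleGraph V) (M : Set V) : Prop :=
  G.IsModule M ∧ ∀ N : Set V, G.IsModule N → (M ∩ N).Nonempty → M ⊆ N ∨ N ⊆ M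

/-!
Write `w` for a new vertex with neighbourhood `S`. For `|V| ≥ 3`, `G + w` is prime as soon as
`S` splits every nontrivial module of `G` (meets it without containing it) and `M ∪ {w}` is a
module for no nonempty proper module `M`, i.e. `S \ M` is never the set of vertices complete
to `M`.

If no clique or independent module has three vertices, a set splitting all nontrivial modules
exists, by induction on `|V|`: when `G` or `Gᶜ` is disconnected its components, and otherwise
its maximal proper modules, partition `V` into proper modules, splitting sets of the parts can be
glued together, and the at most two isolated vertices need separate care. If moreover `G` and
`Gᶜ` have at most one isolated vertex each, the glued set, enlarged by the isolated vertex or by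
a vertex outside the only nontrivial part, also rules out the modules `M ∪ {w}`; so `p(G) ≤ 1`.

Two isolated vertices `a`, `b` of `G` rule out `p(G) = 1`: the new vertex must see both, and then
`{a, b}` is still a module. But after a first new vertex adjacent to `a` only `b` is isolated, so
`p(G) = 2`. Finally a module of size two, given by `max(α_M(G), ω_M(G)) = 2`, rules out `p = 0`.
-/

open Set

def Set.Splits {V : Type*} (S M : Set V) : Prop :=
  (M ∩ S).Nonempty ∧ (M \ S).Nonempty

namespace Set.Splits

variable {V : Type*} {S T M N : Set V}

lemma congr (h : S.Splits M) (hST : ∀ x ∈ M, x ∈ S ↔ x ∈ T) : T.Splits M := by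
  obtain ⟨⟨a, haM, haS⟩, ⟨b, hbM, hbS⟩⟩ := h
  exact ⟨⟨a, haM, (hST a haM).1 haS⟩, ⟨b, hbM, mt (hST b hbM).2 hbS⟩⟩

lemma mono (h : S.Splits M) (hMN : M ⊆ N) : S.Splits N :=
  ⟨h.1.mono (inter_subset_inter_left S hMN), h.2.mono (sdiff_subset_sdiff_left hMN)⟩

lemma union_right (h : S.Splits M) (hT : Disjoint M T) : (S ∪ T).Splits M :=
  h.congr fun _ hx => (or_iff_left (hT.notMem_of_mem_left hx)).symm

lemma union_left (h : T.Splits M) (hS : Disjoint M S) : (S ∪ T).Splits M :=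
  union_comm T S ▸ h.union_right hS

end Set.Splits

lemma Set.exists_subset_splits_of_ncard_le_two {V : Type*} [Finite V] {I : Set V}
    (hI : I.ncard ≤ 2) : ∃ J ⊆ I, ∀ M ⊆ I, M.Nontrivial → J.Splits M := by
  rcases I.eq_empty_or_nonempty with rfl | ⟨a, ha⟩
  · exact ⟨∅, empty_subset _, fun M hM hnt =>
      (hnt.nonempty.ne_empty (subset_empty_iff.mp hM)).elim⟩
  refine ⟨{a}, singleton_subset_iff.mpr ha, fun M hMI hnt => ?_⟩
  obtain rfl : M = I :=
    eq_of_subset_of_ncard_le hMI (hI.trans (one_lt_ncard_iff_nontrivial.mpr hnt))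
  obtain ⟨b, hb, hba⟩ := hnt.exists_ne a
  exact ⟨⟨a, ha, rfl⟩, ⟨b, hb, hba⟩⟩

namespace SimpleGraph

variable {V : Type*} {G : SimpleGraph V} {M N C S : Set V} {σ : Set V → Set V}

section Module

lemma isModule_singleton (G : SimpleGraph V) (x : V) : G.IsModule {x} := by
  intro v _
  by_cases h : G.Adj v x
  · exact Or.inl fun m hm => hm ▸ h
  · exact Or.inr fun m hm => hm ▸ h

lemma IsModule.adj_iff (hM : G.IsModule M) {v a b : V} (hv : v ∉ M) (ha : a ∈ M)
    (hb : b ∈ M) : G.Adj v a ↔ G.Adj v b := by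
  rcases hM v hv with h | h
  · exact iff_of_true (h a ha) (h b hb)
  · exact iff_of_false (h a ha) (h b hb)

lemma IsModule.inter (hM : G.IsModule M) (hN : G.IsModule N) : G.IsModule (M ∩ N) := by
  intro v hv
  by_cases hvM : v ∈ M
  · rcases hN v fun hvN => hv ⟨hvM, hvN⟩ with h | h
    · exact Or.inl fun m hm => h m hm.2
    · exact Or.inr fun m hm => h m hm.2
  · rcases hM v hvM with h | h
    · exact Or.inl fun m hm => h m hm.1
    · exact Or.inr fun m hm => h m hm.1

lemma IsModule.union (hM : G.IsModule M) (hN : G.IsModule N) {x : V} (hxM : x ∈ M)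
    (hxN : x ∈ N) : G.IsModule (M ∪ N) := by
  intro v hv
  have hvM : v ∉ M := fun h => hv (Or.inl h)
  have hvN : v ∉ N := fun h => hv (Or.inr h)
  have hiff : ∀ m ∈ M ∪ N, G.Adj v m ↔ G.Adj v x := by
    rintro m (hm | hm)
    exacts [hM.adj_iff hvM hm hxM, hN.adj_iff hvN hm hxN]
  by_cases hx : G.Adj v x
  · exact Or.inl fun m hm => (hiff m hm).2 hx
  · exact Or.inr fun m hm => mt (hiff m hm).1 hx

lemma IsModule.compl (hM : G.IsModule M) : Gᶜ.IsModule M := by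
  intro v hv
  rcases hM v hv with h | h
  · exact Or.inr fun m hm hc => hc.2 (h m hm)
  · exact Or.inl fun m hm => ⟨fun he => hv (he ▸ hm), h m hm⟩

@[simp]
lemma isModule_compl_iff : Gᶜ.IsModule M ↔ G.IsModule M :=
  ⟨fun h => compl_compl G ▸ h.compl, IsModule.compl⟩

lemma IsModule.preimage {W : Type*} {H : SimpleGraph W} {f : V → W} {N : Set W}
    (hN : H.IsModule N) : (H.comap f).IsModule (f ⁻¹' N) := by
  intro v hv
  rcases hN (f v) hv with h | h
  · exact Or.inl fun m hm => h (f m) hm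
  · exact Or.inr fun m hm => h (f m) hm

lemma IsModule.image_val (hC : G.IsModule C) {M : Set C} (hM : (G.induce C).IsModule M) :
    G.IsModule (Subtype.val '' M) := by
  intro v hv
  by_cases hvC : v ∈ C
  · rcases hM ⟨v, hvC⟩ fun h => hv ⟨_, h, rfl⟩ with h | h
    · exact Or.inl (by rintro _ ⟨m, hm, rfl⟩; exact h m hm)
    · exact Or.inr (by rintro _ ⟨m, hm, rfl⟩; exact h m hm)
  · rcases hC v hvC with h | h
    · exact Or.inl (by rintro _ ⟨m, -, rfl⟩; exact h m m.2)
    · exact Or.inr (by rintro _ ⟨m, -, rfl⟩; exact h m m.2)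

end Module

/-- `max(α_M(G), ω_M(G)) ≤ 2`. -/
def HasSmallHomogeneousModules (G : SimpleGraph V) : Prop :=
  ∀ M, G.IsModule M → G.IsClique M ∨ G.IsIndepSet M → M.ncard ≤ 2

def isolatedSet (G : SimpleGraph V) : Set V := {v | ∀ w, ¬ G.Adj v w}

lemma isolatedCount_eq_ncard [Fintype V] : G.isolatedCount = G.isolatedSet.ncard := rfl

lemma isModule_of_subset_isolatedSet (hM : M ⊆ G.isolatedSet) : G.IsModule M :=
  fun _ _ => Or.inr fun _ hm hadj => hM hm _ hadj.symm

namespace HasSmallHomogeneousModules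

lemma compl (hG : G.HasSmallHomogeneousModules) : Gᶜ.HasSmallHomogeneousModules := by
  intro M hM hMh
  rw [isClique_compl, isIndepSet_compl, or_comm] at hMh
  exact hG M (isModule_compl_iff.mp hM) hMh

lemma induce (hG : G.HasSmallHomogeneousModules) (hC : G.IsModule C) :
    (G.induce C).HasSmallHomogeneousModules := by
  intro M hM hMh
  rw [← ncard_image_of_injective M Subtype.val_injective]
  refine hG _ (hC.image_val hM) (hMh.imp ?_ ?_)
  · rintro hcl _ ⟨a, ha, rfl⟩ _ ⟨b, hb, rfl⟩ hab
    exact hcl ha hb (fun h => hab (congrArg _ h))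
  · rintro hind _ ⟨a, ha, rfl⟩ _ ⟨b, hb, rfl⟩ hab
    exact hind ha hb (fun h => hab (congrArg _ h))

lemma ncard_isolatedSet_le (hG : G.HasSmallHomogeneousModules) : G.isolatedSet.ncard ≤ 2 :=
  hG _ (isModule_of_subset_isolatedSet subset_rfl) (Or.inr fun _ hv _ _ _ => hv _)

end HasSmallHomogeneousModules

section Isolated

lemma isolatedSet_eq_univ_of_forall_eq_or_eq {x y : V} (hV : ∀ v, v = x ∨ v = y)
    (hxy : ¬ G.Adj x y) : G.isolatedSet = univ :=
  eq_univ_of_forall fun v w hvw => by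
    rcases hV v with rfl | rfl <;> rcases hV w with rfl | rfl
    exacts [hvw.ne rfl, hxy hvw, hxy hvw.symm, hvw.ne rfl]

variable [Fintype V]

lemma isolatedCount_eq_two_of_ncard_univ (h : (univ : Set V).ncard = 2) :
    G.isolatedCount = 2 ∨ Gᶜ.isolatedCount = 2 := by
  obtain ⟨x, y, -, hV⟩ := ncard_eq_two.mp h
  have hV' : ∀ v, v = x ∨ v = y := fun v => by
    have := mem_univ v
    rwa [hV] at this
  rw [isolatedCount_eq_ncard, isolatedCount_eq_ncard]
  by_cases hadj : G.Adj x y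
  · refine Or.inr ?_
    rw [isolatedSet_eq_univ_of_forall_eq_or_eq (G := Gᶜ) hV' fun h => h.2 hadj, h]
  · exact Or.inl (by rw [isolatedSet_eq_univ_of_forall_eq_or_eq hV' hadj, h])

lemma HasSmallHomogeneousModules.isolatedSet_subsingleton (hG : G.HasSmallHomogeneousModules)
    (hI : G.isolatedCount ≠ 2) : G.isolatedSet.Subsingleton := by
  have := hG.ncard_isolatedSet_le
  rw [isolatedCount_eq_ncard] at hI
  exact ncard_le_one_iff_subsingleton.mp (by omega)

end Isolated

def SplitsModulesIn (G : SimpleGraph V) (C S : Set V) : Prop :=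
  ∀ M ⊆ C, G.IsModule M → M.Nontrivial → S.Splits M

@[simp]
lemma splitsModulesIn_compl_iff : Gᶜ.SplitsModulesIn C S ↔ G.SplitsModulesIn C S := by
  simp only [SplitsModulesIn, isModule_compl_iff]

def LocallySplits (G : SimpleGraph V) (σ : Set V → Set V) : Prop :=
  ∀ C, G.IsModule C → C ≠ univ → G.SplitsModulesIn C (σ C)

@[simp]
lemma locallySplits_compl_iff : Gᶜ.LocallySplits σ ↔ G.LocallySplits σ := by
  simp only [LocallySplits, isModule_compl_iff, splitsModulesIn_compl_iff]

lemma SplitsModulesIn.image_val {T : Set C} (h : (G.induce C).SplitsModulesIn univ T) :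
    G.SplitsModulesIn C (Subtype.val '' T) := by
  intro M hMC hM hnt
  obtain ⟨x, hx, y, hy, hxy⟩ := hnt
  have hM' : (G.induce C).IsModule (Subtype.val ⁻¹' M) := hM.preimage
  obtain ⟨⟨a, haM, haT⟩, ⟨b, hbM, hbT⟩⟩ := h _ (subset_univ _) hM'
    ⟨⟨x, hMC hx⟩, hx, ⟨y, hMC hy⟩, hy, fun h => hxy (congrArg Subtype.val h)⟩
  exact ⟨⟨a, haM, a, haT, rfl⟩,
    ⟨b, hbM, fun ⟨b', hb', he⟩ => hbT (Subtype.ext he ▸ hb')⟩⟩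

lemma exists_locallySplits_of_induce
    (h : ∀ C, G.IsModule C → C ≠ univ →
      ∃ T : Set C, (G.induce C).SplitsModulesIn univ T) :
    ∃ σ, G.LocallySplits σ := by
  choose! T hT using h
  exact ⟨fun C => Subtype.val '' T C, fun C hC hCu => (hT C hC hCu).image_val⟩

section Connectivity

lemma eq_of_reachable_of_mem_isolatedSet {x y : V} (hx : x ∈ G.isolatedSet)
    (h : G.Reachable x y) : y = x := by
  obtain ⟨p⟩ := h
  cases p with
  | nil => rfl
  | cons hadj _ => exact (hx _ hadj).elim

lemma not_reachable_of_forall_not_adj (h : ∀ m ∈ M, ∀ v ∉ M, ¬ G.Adj m v) {a b : V}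
    (ha : a ∈ M) (hb : b ∉ M) : ¬ G.Reachable a b := fun ⟨p⟩ => by
  obtain ⟨d, -, hd₁, hd₂⟩ := p.exists_boundary_dart M ha hb
  exact h _ hd₁ _ hd₂ d.adj

lemma not_preconnected_of_forall_not_adj (hM : M.Nonempty) (hMu : M ≠ univ)
    (h : ∀ m ∈ M, ∀ v ∉ M, ¬ G.Adj m v) : ¬ G.Preconnected := fun hc => by
  obtain ⟨a, ha⟩ := hM
  obtain ⟨b, hb⟩ := (ne_univ_iff_exists_notMem M).mp hMu
  exact not_reachable_of_forall_not_adj h ha hb (hc a b)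

/-- If `M ∪ N = univ`, one pair `a ∈ M \ N`, `b ∈ N \ M` decides every adjacency between `M`
and its complement, so `M` is cut off from it in `G` or in `Gᶜ`. -/
lemma union_ne_univ_of_preconnected (hc : G.Preconnected) (hcc : Gᶜ.Preconnected)
    (hM : G.IsModule M) (hN : G.IsModule N) (hMu : M ≠ univ) (hNu : N ≠ univ) :
    M ∪ N ≠ univ := by
  intro hMN
  have hcover : ∀ v, v ∉ M → v ∈ N := fun v hv =>
    ((hMN ▸ mem_univ v : v ∈ M ∪ N)).resolve_left hv
  obtain ⟨a, ha⟩ := (ne_univ_iff_exists_notMem N).mp hNu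
  obtain ⟨b, hb⟩ := (ne_univ_iff_exists_notMem M).mp hMu
  have haM : a ∈ M := not_not.mp fun h => ha (hcover a h)
  have key : ∀ m ∈ M, ∀ v ∉ M, G.Adj m v ↔ G.Adj a b := fun m hm v hv => by
    rw [G.adj_comm, hM.adj_iff hv hm haM, G.adj_comm, hN.adj_iff ha (hcover v hv) (hcover b hb)]
  have hMne : M.Nonempty := ⟨a, haM⟩
  by_cases hab : G.Adj a b
  · exact not_preconnected_of_forall_not_adj (G := Gᶜ) hMne hMu
      (fun m hm v hv hadj => hadj.2 ((key m hm v hv).2 hab)) hcc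
  · exact not_preconnected_of_forall_not_adj hMne hMu
      (fun m hm v hv hadj => hab ((key m hm v hv).1 hadj)) hc

lemma exists_greatest_module_of_preconnected [Finite V] [Nontrivial V] (hc : G.Preconnected)
    (hcc : Gᶜ.Preconnected) (x : V) :
    ∃ P, (G.IsModule P ∧ P ≠ univ ∧ x ∈ P) ∧
      ∀ M, G.IsModule M → M ≠ univ → x ∈ M → M ⊆ P := by
  obtain ⟨y, hyx⟩ := exists_ne x
  obtain ⟨P, hPs, hPmax⟩ := Finite.exists_maximal (toFinite
    {P : Set V | G.IsModule P ∧ P ≠ univ ∧ x ∈ P})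
    ⟨{x}, isModule_singleton G x, (ne_univ_iff_exists_notMem _).mpr ⟨y, hyx⟩, rfl⟩
  refine ⟨P, hPs, fun M hM hMu hxM => ?_⟩
  have hMP : M ∪ P ≤ P := hPmax ⟨hM.union hPs.1 hxM hPs.2.2,
    union_ne_univ_of_preconnected hc hcc hM hPs.1 hMu hPs.2.1, Or.inl hxM⟩ subset_union_right
  exact subset_union_left.trans hMP

end Connectivity

structure ModularParts (G : SimpleGraph V) where
  part : V → Set V
  mem_part : ∀ x, x ∈ part x
  part_eq : ∀ {x y}, y ∈ part x → part y = part x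
  isModule : ∀ x, G.IsModule (part x)
  ne_univ : ∀ x, part x ≠ univ

def componentParts (hc : ¬ G.Preconnected) : G.ModularParts where
  part x := {y | G.Reachable x y}
  mem_part x := Reachable.refl x
  part_eq {x y} hy := by
    ext z
    exact ⟨fun hz => hy.trans hz, fun hz => hy.symm.trans hz⟩
  isModule x := fun _ hv => Or.inr fun _ hm hadj => hv (hm.trans hadj.symm.reachable)
  ne_univ x hx := hc fun a b =>
    (eq_univ_iff_forall.mp hx a).symm.trans (eq_univ_iff_forall.mp hx b)

lemma exists_modularParts_of_preconnected [Finite V] [Nontrivial V] (hc : G.Preconnected)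
    (hcc : Gᶜ.Preconnected) :
    ∃ P : G.ModularParts, ∀ M, G.IsModule M → M ≠ univ → ∀ x ∈ M, M ⊆ P.part x := by
  choose part hpart hgreatest using exists_greatest_module_of_preconnected hc hcc (G := G)
  refine ⟨⟨part, fun x => (hpart x).2.2, fun {x y} hy => ?_, fun x => (hpart x).1,
    fun x => (hpart x).2.1⟩, fun M hM hMu x hx => hgreatest x M hM hMu hx⟩
  have hxy : part x ⊆ part y := hgreatest y _ (hpart x).1 (hpart x).2.1 hy
  exact (hgreatest x _ (hpart y).1 (hpart y).2.1 (hxy (hpart x).2.2)).antisymm hxy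

namespace ModularParts

variable (P : G.ModularParts)

lemma part_eq_part {x y z : V} (hx : z ∈ P.part x) (hy : z ∈ P.part y) :
    P.part x = P.part y :=
  (P.part_eq hx).symm.trans (P.part_eq hy)

/-- The union of the sets `σ C ∩ C` over the nontrivial parts `C`. -/
def glue (σ : Set V → Set V) : Set V := {x | (P.part x).Nontrivial ∧ x ∈ σ (P.part x)}

variable {P}

lemma mem_glue_iff {x y : V} (hy : y ∈ P.part x) (hx : (P.part x).Nontrivial) :
    y ∈ P.glue σ ↔ y ∈ σ (P.part x) := by
  show (P.part y).Nontrivial ∧ _ ↔ _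
  rw [P.part_eq hy]
  exact and_iff_right hx

lemma notMem_glue {x : V} (hx : (P.part x).Subsingleton) : x ∉ P.glue σ :=
  fun h => h.1.not_subsingleton hx

lemma splitsModulesIn_glue (hσ : G.LocallySplits σ) (x : V) :
    G.SplitsModulesIn (P.part x) (P.glue σ) := fun M hMC hM hnt =>
  (hσ _ (P.isModule x) (P.ne_univ x) M hMC hM hnt).congr
    fun _ hy => (mem_glue_iff (hMC hy) (hnt.mono hMC)).symm

lemma disjoint_part_of_subset_part {M : Set V} {m y : V} (hM : M ⊆ P.part m)
    (hy : P.part y ≠ P.part m) : Disjoint (P.part y) M :=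
  Set.disjoint_left.mpr fun _ hzy hzM => hy (P.part_eq_part hzy (hM hzM))

lemma splits_part_glue (hσ : G.LocallySplits σ) {x : V} (hx : (P.part x).Nontrivial) :
    (P.glue σ).Splits (P.part x) :=
  splitsModulesIn_glue hσ x _ subset_rfl (P.isModule x) hx

end ModularParts

section Splitter

lemma subsingleton_componentParts_part_iff (hc : ¬ G.Preconnected) {x : V} :
    ((componentParts hc).part x).Subsingleton ↔ x ∈ G.isolatedSet := by
  refine ⟨fun h w hadj => hadj.ne (h (Reachable.refl x) hadj.reachable), fun hx y hy z hz => ?_⟩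
  exact (eq_of_reachable_of_mem_isolatedSet hx hy).trans
    (eq_of_reachable_of_mem_isolatedSet hx hz).symm

lemma IsModule.subset_isolatedSet (hM : G.IsModule M) (hnt : M.Nontrivial)
    (h : ∀ y ∈ M, ∀ z ∈ M, G.Reachable y z → y = z) : M ⊆ G.isolatedSet := by
  intro z hz w hadj
  obtain ⟨z', hz', hz'z⟩ := hnt.exists_ne z
  by_cases hw : w ∈ M
  · exact hadj.ne (h z hz w hw hadj.reachable)
  · have hwz' : G.Adj w z' := (hM.adj_iff hw hz hz').1 hadj.symm
    exact hz'z (h z hz z' hz' (hadj.reachable.trans hwz'.reachable)).symm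

/-- A nontrivial module either meets some component in two vertices or consists of isolated
vertices; `J` takes care of the second kind. -/
lemma splitsModulesIn_univ_glue_union (hc : ¬ G.Preconnected) (hσ : G.LocallySplits σ)
    {J : Set V} (hJI : J ⊆ G.isolatedSet) (hJ : G.SplitsModulesIn G.isolatedSet J) :
    G.SplitsModulesIn univ ((componentParts hc).glue σ ∪ J) := by
  set P := componentParts hc
  intro M _ hM hnt
  by_cases hx : ∃ x, (M ∩ P.part x).Nontrivial
  · obtain ⟨x, hx⟩ := hx
    refine ((P.splitsModulesIn_glue hσ x _ inter_subset_right (hM.inter (P.isModule x))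
      hx).union_right (Set.disjoint_left.mpr fun y hy hyJ => ?_)).mono inter_subset_left
    have hy' := (subsingleton_componentParts_part_iff hc).mpr (hJI hyJ)
    rw [P.part_eq hy.2] at hy'
    exact (hx.mono inter_subset_right).not_subsingleton hy'
  · push Not at hx
    have hMI : M ⊆ G.isolatedSet := hM.subset_isolatedSet hnt fun y hy z hz hyz =>
      hx y ⟨hy, Reachable.refl y⟩ ⟨hz, hyz⟩
    exact (hJ M hMI hM hnt).union_left (Set.disjoint_left.mpr fun y hy =>
      ModularParts.notMem_glue ((subsingleton_componentParts_part_iff hc).mpr (hMI hy)))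

lemma exists_splitter_of_not_preconnected [Finite V] (hc : ¬ G.Preconnected)
    (hG : G.HasSmallHomogeneousModules) (hσ : G.LocallySplits σ) :
    ∃ S, G.SplitsModulesIn univ S := by
  obtain ⟨J, hJI, hJ⟩ := exists_subset_splits_of_ncard_le_two hG.ncard_isolatedSet_le
  exact ⟨_, splitsModulesIn_univ_glue_union hc hσ hJI fun M hM _ hnt => hJ M hM hnt⟩

lemma splitsModulesIn_univ_of_modularParts (P : G.ModularParts)
    (hP : ∀ M, G.IsModule M → M ≠ univ → ∀ x ∈ M, M ⊆ P.part x)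
    (hS : ∀ x, G.SplitsModulesIn (P.part x) S) {x : V} (hx : (P.part x).Nontrivial) :
    G.SplitsModulesIn univ S := by
  intro M _ hM hnt
  by_cases hMu : M = univ
  · exact hMu ▸ (hS x _ subset_rfl (P.isModule x) hx).mono (subset_univ _)
  · obtain ⟨y, hy⟩ := hnt.nonempty
    exact hS y M (hP M hM hMu y hy) hM hnt

lemma exists_splitter_of_preconnected [Finite V] (hc : G.Preconnected) (hcc : Gᶜ.Preconnected)
    (hσ : G.LocallySplits σ) : ∃ S, G.SplitsModulesIn univ S := by
  rcases subsingleton_or_nontrivial V with hV | hV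
  · exact ⟨∅, fun M _ _ hnt => (hnt.not_subsingleton subsingleton_of_subsingleton).elim⟩
  obtain ⟨P, hP⟩ := exists_modularParts_of_preconnected hc hcc
  by_cases hbig : ∃ x, (P.part x).Nontrivial
  · obtain ⟨x, hx⟩ := hbig
    exact ⟨P.glue σ, splitsModulesIn_univ_of_modularParts P hP (P.splitsModulesIn_glue hσ) hx⟩
  · obtain ⟨a, b, hab⟩ := exists_pair_ne V
    refine ⟨{a}, fun M _ hM hnt => ?_⟩
    obtain rfl : M = univ := by
      by_contra hMu
      obtain ⟨y, hy⟩ := hnt.nonempty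
      exact hbig ⟨y, hnt.mono (hP M hM hMu y hy)⟩
    exact ⟨⟨a, mem_univ a, rfl⟩, ⟨b, mem_univ b, hab.symm⟩⟩

theorem HasSmallHomogeneousModules.exists_splitter [Finite V]
    (hG : G.HasSmallHomogeneousModules) : ∃ S, G.SplitsModulesIn univ S := by
  induction h : Nat.card V using Nat.strong_induction_on generalizing V with
  | _ n ih =>
  obtain ⟨σ, hσ⟩ := exists_locallySplits_of_induce (G := G) fun C hC hCu => by
    obtain ⟨x, hx⟩ := (ne_univ_iff_exists_notMem C).mp hCu
    exact ih _ (h ▸ Finite.card_subtype_lt hx) (hG.induce hC) rfl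
  by_cases hc : G.Preconnected
  · by_cases hcc : Gᶜ.Preconnected
    · exact exists_splitter_of_preconnected hc hcc hσ
    · obtain ⟨S, hS⟩ := exists_splitter_of_not_preconnected hcc hG.compl (by simpa using hσ)
      exact ⟨S, splitsModulesIn_compl_iff.mp hS⟩
  · exact exists_splitter_of_not_preconnected hc hG hσ

lemma HasSmallHomogeneousModules.exists_locallySplits [Finite V]
    (hG : G.HasSmallHomogeneousModules) : ∃ σ, G.LocallySplits σ :=
  exists_locallySplits_of_induce fun _ hC _ => (hG.induce hC).exists_splitter

end Splitter

section OneVertex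

def addVertex (G : SimpleGraph V) (S : Set V) : SimpleGraph (V ⊕ Fin 1) where
  Adj
    | .inl u, .inl v => G.Adj u v
    | .inl u, .inr _ => u ∈ S
    | .inr _, .inl v => v ∈ S
    | .inr _, .inr _ => False
  symm := by
    constructor
    rintro (u | _) (v | _) h
    exacts [h.symm, h, h, h]
  loopless := by
    constructor
    rintro (u | _) h
    exacts [G.loopless.irrefl u h, h]

lemma isExtension_addVertex : G.IsExtension (G.addVertex S) := fun _ _ => Iff.rfl

lemma IsModule.preimage_inl {W : Type*} {H : SimpleGraph (V ⊕ W)} {N : Set (V ⊕ W)}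
    (hext : G.IsExtension H) (hN : H.IsModule N) : G.IsModule (Sum.inl ⁻¹' N) := by
  have hG : H.comap Sum.inl = G := by ext u v; exact hext u v
  exact hG ▸ hN.preimage

/-- For the new vertex `w` of `G.addVertex S`, `M ∪ {w}` is a module exactly when `S \ M` is the
set of vertices complete to `M`. -/
def ExtendsNoModule (G : SimpleGraph V) (S : Set V) : Prop :=
  ∀ M, G.IsModule M → M.Nonempty → M ≠ univ → S \ M ≠ {v | ∀ m ∈ M, G.Adj v m}

lemma exists_eq_inl_of_ne_inr {z : V ⊕ Fin 1} (hz : z ≠ .inr 0) : ∃ u, z = .inl u := by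
  rcases z with u | i
  · exact ⟨u, rfl⟩
  · exact (hz (by rw [Fin.eq_zero i])).elim

lemma image_inl_preimage_of_inr_notMem {N : Set (V ⊕ Fin 1)} (hw : Sum.inr 0 ∉ N) :
    Sum.inl '' (Sum.inl ⁻¹' N) = N :=
  image_preimage_eq_of_subset fun _ hz => (exists_eq_inl_of_ne_inr fun h => hw (h ▸ hz)).imp
    fun _ hu => hu.symm

lemma sdiff_eq_of_isModule_addVertex {N : Set (V ⊕ Fin 1)} (hN : (G.addVertex S).IsModule N)
    (hw : Sum.inr 0 ∈ N) (hne : (Sum.inl ⁻¹' N).Nonempty) :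
    S \ Sum.inl ⁻¹' N = {v | ∀ m ∈ Sum.inl ⁻¹' N, G.Adj v m} := by
  obtain ⟨m₀, hm₀⟩ := hne
  ext v
  refine ⟨fun ⟨hvS, hvN⟩ m hm => ?_, fun hv => ?_⟩
  · exact (hN.adj_iff hvN hw hm).1 hvS
  · have hvN : Sum.inl v ∉ N := fun h => G.loopless.irrefl v (hv v h)
    exact ⟨(hN.adj_iff hvN hw hm₀).2 (hv m₀ hm₀), hvN⟩

lemma subsingleton_preimage_inl_of_inr_notMem (hS : G.SplitsModulesIn univ S)
    {N : Set (V ⊕ Fin 1)} (hN : (G.addVertex S).IsModule N) (hw : Sum.inr 0 ∉ N) :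
    (Sum.inl ⁻¹' N).Subsingleton := by
  by_contra hnt
  obtain ⟨⟨a, haN, haS⟩, ⟨b, hbN, hbS⟩⟩ :=
    hS _ (subset_univ _) (hN.preimage_inl isExtension_addVertex) (not_subsingleton_iff.mp hnt)
  exact hbS ((hN.adj_iff hw haN hbN).1 haS)

theorem isPrimeGraph_addVertex [Fintype V] (h3 : 3 ≤ Fintype.card V)
    (hS : G.SplitsModulesIn univ S) (hS' : G.ExtendsNoModule S) :
    (G.addVertex S).IsPrimeGraph := by
  refine ⟨by simp only [Fintype.card_sum, Fintype.card_fin]; omega, fun N hN => ?_⟩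
  by_cases hw : Sum.inr 0 ∈ N
  · rcases (Sum.inl ⁻¹' N).eq_empty_or_nonempty with h0 | hne
    · refine Or.inr (Or.inl ⟨Sum.inr 0, ?_⟩)
      ext (u | i)
      · exact iff_of_false (fun h => (h0 ▸ h : u ∈ (∅ : Set V))) Sum.inl_ne_inr
      · exact iff_of_true (Fin.eq_zero i ▸ hw) (by rw [Fin.eq_zero i]; rfl)
    by_cases hMu : Sum.inl ⁻¹' N = univ
    · refine Or.inr (Or.inr (eq_univ_of_forall ?_))
      rintro (u | i)
      exacts [eq_univ_iff_forall.mp hMu u, Fin.eq_zero i ▸ hw]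
    · exact (hS' _ (hN.preimage_inl isExtension_addVertex) hne hMu
        (sdiff_eq_of_isModule_addVertex hN hw hne)).elim
  · rw [← image_inl_preimage_of_inr_notMem hw]
    rcases (subsingleton_preimage_inl_of_inr_notMem hS hN hw).eq_empty_or_singleton with
      h | ⟨v, h⟩
    · exact Or.inl (by rw [h, image_empty])
    · exact Or.inr (Or.inl ⟨Sum.inl v, by rw [h, image_singleton]⟩)

end OneVertex

section Neighborhood

/-- A vertex of `R` in `S` is complete to `M`, hence so is every vertex of `R`. -/
lemma sdiff_ne_of_splits {R : Set V} (hR : G.IsModule R) (hRM : Disjoint R M)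
    (hS : S.Splits R) : S \ M ≠ {v | ∀ m ∈ M, G.Adj v m} := by
  intro heq
  obtain ⟨⟨a, haR, haS⟩, ⟨b, hbR, hbS⟩⟩ := hS
  have ha : a ∈ {v | ∀ m ∈ M, G.Adj v m} := heq ▸ ⟨haS, hRM.notMem_of_mem_left haR⟩
  have hb : b ∈ S \ M := heq ▸ fun m hm => by
    rw [G.adj_comm, ← hR.adj_iff (hRM.notMem_of_mem_right hm) haR hbR, G.adj_comm]
    exact ha m hm
  exact hbS hb.1

lemma exists_neighborhood_of_not_preconnected (hc : ¬ G.Preconnected)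
    (hσ : G.LocallySplits σ) (hI : G.isolatedSet.Subsingleton) :
    ∃ S, G.SplitsModulesIn univ S ∧ G.ExtendsNoModule S := by
  set P := componentParts hc
  set S := P.glue σ ∪ G.isolatedSet
  refine ⟨S, splitsModulesIn_univ_glue_union hc hσ subset_rfl
    fun M hM _ hnt => (hnt.not_subsingleton (hI.anti hM)).elim, ?_⟩
  have hmeet : ∀ x, ∃ s ∈ S, G.Reachable x s := by
    intro x
    by_cases hx : (P.part x).Nontrivial
    · obtain ⟨s, hsx, hs⟩ := (P.splits_part_glue hσ hx).1
      exact ⟨s, Or.inl hs, hsx⟩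
    · exact ⟨x, Or.inr ((subsingleton_componentParts_part_iff hc).mp
        (not_nontrivial_iff.mp hx)), Reachable.refl x⟩
  intro M hM ⟨m₀, hm₀⟩ hMu heq
  by_cases hconn : ∀ m ∈ M, G.Reachable m₀ m
  · -- `M` lies in the component of `m₀`, and the `S`-vertex of another component is in
    -- `S \ M` without being adjacent to `M`
    obtain ⟨y, hy⟩ := (ne_univ_iff_exists_notMem _).mp (P.ne_univ m₀)
    obtain ⟨s, hs, hys⟩ := hmeet y
    have hsN : s ∈ {v | ∀ m ∈ M, G.Adj v m} :=
      heq ▸ ⟨hs, fun h => hy ((hconn s h).trans hys.symm)⟩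
    exact hy ((hsN m₀ hm₀).symm.reachable.trans hys.symm)
  · -- no vertex is complete to `M`, so `M` is a union of components, and it contains `S`
    push Not at hconn
    obtain ⟨m₁, hm₁, h01⟩ := hconn
    have hN : ∀ v, ¬ ∀ m ∈ M, G.Adj v m := fun v hv =>
      h01 ((hv m₀ hm₀).symm.reachable.trans (hv m₁ hm₁).reachable)
    obtain ⟨z, hz⟩ := (ne_univ_iff_exists_notMem M).mp hMu
    obtain ⟨s, hs, hzs⟩ := hmeet z
    have hsM : s ∈ M := not_not.mp fun h => by
      have hsN : s ∈ {v | ∀ m ∈ M, G.Adj v m} := heq ▸ ⟨hs, h⟩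
      exact hN s hsN
    refine not_reachable_of_forall_not_adj (fun m hm v hv hadj => ?_) hsM hz hzs.symm
    exact hN v ((hM v hv).resolve_right fun h => h m hm hadj.symm)

lemma exists_neighborhood_of_unique_nontrivial_part (P : G.ModularParts)
    (hP : ∀ M, G.IsModule M → M ≠ univ → ∀ x ∈ M, M ⊆ P.part x)
    (hσ : G.LocallySplits σ) {x : V} (hx : (P.part x).Nontrivial)
    (huniq : ∀ y, (P.part y).Nontrivial → P.part y = P.part x) :
    ∃ S, G.SplitsModulesIn univ S ∧ G.ExtendsNoModule S := by
  set R := P.part x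
  obtain ⟨x₀, hx₀⟩ := (ne_univ_iff_exists_notMem R).mp (P.ne_univ x)
  set T : Set V := {x₀} \ {v | ∀ r ∈ R, G.Adj v r}
  have hRT : Disjoint R T := Set.disjoint_left.mpr fun r hr hrT => hx₀ (hrT.1 ▸ hr)
  refine ⟨P.glue σ ∪ T, splitsModulesIn_univ_of_modularParts P hP (fun y => ?_) hx, ?_⟩
  · by_cases hy : (P.part y).Nontrivial
    · rw [huniq y hy]
      exact fun M hMR hM hnt =>
        (P.splitsModulesIn_glue hσ x M hMR hM hnt).union_right (hRT.mono_left hMR)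
    · exact fun M hMy _ hnt => (hy (hnt.mono hMy)).elim
  intro M hM ⟨m, hm⟩ hMu heq
  have hMm := hP M hM hMu m hm
  by_cases hmx : P.part m = R
  · -- `x₀` lies outside `M ⊆ R` and is in `S` exactly when it is not complete to `M`
    have hMR : M ⊆ R := hmx ▸ hMm
    have hx₀M : x₀ ∉ M := fun h => hx₀ (hMR h)
    rcases P.isModule x x₀ hx₀ with hcomp | hanti
    · have hx₀S : x₀ ∈ (P.glue σ ∪ T) \ M := heq ▸ fun m' hm' => hcomp m' (hMR hm')
      rcases hx₀S.1 with h | h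
      · exact hx₀ (huniq x₀ h.1 ▸ P.mem_part x₀)
      · exact h.2 hcomp
    · have hx₀N : x₀ ∈ {v | ∀ m ∈ M, G.Adj v m} :=
        heq ▸ ⟨Or.inr ⟨rfl, fun h => hanti m (hMR hm) (h m (hMR hm))⟩, hx₀M⟩
      exact hanti m (hMR hm) (hx₀N m hm)
  · exact sdiff_ne_of_splits (P.isModule x) (P.disjoint_part_of_subset_part hMm (Ne.symm hmx))
      ((P.splits_part_glue hσ hx).union_right hRT) heq

lemma exists_neighborhood_of_preconnected [Finite V] (hc : G.Preconnected)
    (hcc : Gᶜ.Preconnected) (hσ : G.LocallySplits σ) (hM : G.IsModule M) (hnt : M.Nontrivial)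
    (hMu : M ≠ univ) :
    ∃ S, G.SplitsModulesIn univ S ∧ G.ExtendsNoModule S := by
  obtain ⟨x, hx⟩ := hnt.nonempty
  obtain ⟨x', -, hx'⟩ := hnt.exists_ne x
  have : Nontrivial V := ⟨x', x, hx'⟩
  obtain ⟨P, hP⟩ := exists_modularParts_of_preconnected hc hcc
  have hPx : (P.part x).Nontrivial := hnt.mono (hP M hM hMu x hx)
  by_cases huniq : ∀ y, (P.part y).Nontrivial → P.part y = P.part x
  · exact exists_neighborhood_of_unique_nontrivial_part P hP hσ hPx huniq
  push Not at huniq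
  obtain ⟨y, hPy, hyx⟩ := huniq
  refine ⟨P.glue σ, splitsModulesIn_univ_of_modularParts P hP (P.splitsModulesIn_glue hσ) hPx,
    fun M' hM' ⟨m, hm⟩ hM'u => ?_⟩
  have hM'm := hP M' hM' hM'u m hm
  by_cases hmx : P.part x = P.part m
  · exact sdiff_ne_of_splits (P.isModule y) (P.disjoint_part_of_subset_part hM'm (hmx ▸ hyx))
      (P.splits_part_glue hσ hPy)
  · exact sdiff_ne_of_splits (P.isModule x) (P.disjoint_part_of_subset_part hM'm hmx)
      (P.splits_part_glue hσ hPx)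

end Neighborhood

section PrimeExtension

variable {W : Type*} {H : SimpleGraph W} {N : Set W}

namespace IsPrimeGraph

variable [Fintype W]

lemma compl (h : H.IsPrimeGraph) : Hᶜ.IsPrimeGraph :=
  ⟨h.1, fun M hM => h.2 M (isModule_compl_iff.mp hM)⟩

lemma eq_univ_of_nontrivial (h : H.IsPrimeGraph) (hN : H.IsModule N) (hnt : N.Nontrivial) :
    N = univ := by
  rcases h.2 N hN with rfl | ⟨v, rfl⟩ | hu
  exacts [(hnt.nonempty.ne_empty rfl).elim, (hnt.not_subsingleton subsingleton_singleton).elim, hu]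

lemma four_le_ncard (h : H.IsPrimeGraph) (hN : H.IsModule N) (hnt : N.Nontrivial) :
    4 ≤ N.ncard := by
  rw [h.eq_univ_of_nontrivial hN hnt, ncard_univ, Nat.card_eq_fintype_card]
  exact h.1

lemma exists_adj (h : H.IsPrimeGraph) (v : W) : ∃ w, H.Adj v w := by
  by_contra hv
  push Not at hv
  have hN : H.IsModule {v}ᶜ := fun u hu => Or.inr fun m _ hadj =>
    hv m (not_not.mp hu ▸ hadj)
  have hnt : ({v}ᶜ : Set W).Nontrivial := by
    rw [← one_lt_ncard_iff_nontrivial, ncard_compl, ncard_singleton, Nat.card_eq_fintype_card]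
    have := h.1
    omega
  exact (h.eq_univ_of_nontrivial hN hnt ▸ mem_univ v : v ∈ ({v}ᶜ : Set W)) rfl

lemma comap_equiv {A : Type*} [Fintype A] (h : H.IsPrimeGraph) (e : A ≃ W) :
    (H.comap e).IsPrimeGraph := by
  refine ⟨Fintype.card_congr e ▸ h.1, fun M hM => ?_⟩
  have hH : (H.comap e).comap e.symm = H := by
    rw [comap_comap]
    convert comap_id
    ext v
    exact e.apply_symm_apply v
  rw [← e.preimage_symm_preimage M]
  rcases h.2 _ (hH ▸ hM.preimage) with h0 | ⟨v, hv⟩ | hu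
  · exact Or.inl (by rw [h0, preimage_empty])
  · exact Or.inr (Or.inl ⟨e.symm v, by rw [hv]; ext z; exact e.eq_symm_apply.symm⟩)
  · exact Or.inr (Or.inr (by rw [hu, preimage_univ]))

end IsPrimeGraph

lemma IsExtension.compl {H : SimpleGraph (V ⊕ W)} (h : G.IsExtension H) :
    Gᶜ.IsExtension Hᶜ := fun u v => by
  rw [compl_adj, compl_adj, h u v, Sum.inl_injective.ne_iff]

variable [Fintype V]

def HasPrimeExtension (G : SimpleGraph V) (p : ℕ) : Prop :=
  ∃ H : SimpleGraph (V ⊕ Fin p), G.IsExtension H ∧ H.IsPrimeGraph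

lemma HasPrimeExtension.compl {p : ℕ} (h : G.HasPrimeExtension p) : Gᶜ.HasPrimeExtension p :=
  let ⟨H, hext, hH⟩ := h
  ⟨Hᶜ, hext.compl, hH.compl⟩

@[simp]
lemma hasPrimeExtension_compl_iff {p : ℕ} : Gᶜ.HasPrimeExtension p ↔ G.HasPrimeExtension p :=
  ⟨fun h => compl_compl G ▸ h.compl, HasPrimeExtension.compl⟩

lemma primeBound_eq {p : ℕ} (hp : G.HasPrimeExtension p)
    (hlt : ∀ q < p, ¬ G.HasPrimeExtension q) : G.primeBound = p :=
  le_antisymm (Nat.sInf_le hp) (le_csInf ⟨p, hp⟩ fun q hq => not_lt.1 fun h => hlt q h hq)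

lemma primeBound_compl : Gᶜ.primeBound = G.primeBound :=
  congrArg sInf (Set.ext fun _ => hasPrimeExtension_compl_iff)

lemma not_hasPrimeExtension_zero (hM : G.IsModule M) (hM2 : M.ncard = 2) :
    ¬ G.HasPrimeExtension 0 := by
  rintro ⟨H, hext, hH⟩
  have hN : H.IsModule (Sum.inl '' M) := by
    rintro (u | i) hu
    · rcases hM u (fun h => hu ⟨u, h, rfl⟩) with h | h
      · exact Or.inl (by rintro _ ⟨m, hm, rfl⟩; exact (hext u m).2 (h m hm))
      · exact Or.inr (by rintro _ ⟨m, hm, rfl⟩; exact mt (hext u m).1 (h m hm))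
    · exact i.elim0
  have hN2 : (Sum.inl '' M : Set (V ⊕ Fin 0)).ncard = 2 := by
    rw [ncard_image_of_injective _ Sum.inl_injective, hM2]
  have := hH.four_le_ncard hN (one_lt_ncard_iff_nontrivial.mp (by omega))
  omega

lemma not_hasPrimeExtension_one (hI : G.isolatedCount = 2) : ¬ G.HasPrimeExtension 1 := by
  rintro ⟨H, hext, hH⟩
  rw [isolatedCount_eq_ncard] at hI
  obtain ⟨a, b, hab, hIab⟩ := ncard_eq_two.mp hI
  have hadj : ∀ c ∈ G.isolatedSet, ∀ z, H.Adj z (.inl c) ↔ ∃ i, z = .inr i := by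
    intro c hc z
    rcases z with u | i
    · exact iff_of_false (fun h => hc u ((hext u c).1 h).symm) (by simp)
    · obtain ⟨y, hy⟩ := hH.exists_adj (.inl c)
      rcases y with u | j
      · exact (hc u ((hext c u).1 hy)).elim
      · exact iff_of_true (Fin.eq_zero i ▸ Fin.eq_zero j ▸ hy.symm) ⟨i, rfl⟩
  have hiso : ∀ m ∈ ({.inl a, .inl b} : Set (V ⊕ Fin 1)),
      ∃ c ∈ G.isolatedSet, m = .inl c := by
    rintro m (rfl | rfl)
    exacts [⟨a, by rw [hIab]; exact mem_insert a _, rfl⟩,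
      ⟨b, by rw [hIab]; exact mem_insert_of_mem a rfl, rfl⟩]
  have hN : H.IsModule {.inl a, .inl b} := by
    intro z _
    by_cases hz : ∃ i, z = .inr i
    · exact Or.inl fun m hm => by
        obtain ⟨c, hc, rfl⟩ := hiso m hm
        exact (hadj c hc z).2 hz
    · exact Or.inr fun m hm => by
        obtain ⟨c, hc, rfl⟩ := hiso m hm
        exact mt (hadj c hc z).1 hz
  have := hH.four_le_ncard hN (one_lt_ncard_iff_nontrivial.mp
    (by rw [ncard_pair (Sum.inl_injective.ne hab)]; omega))
  rw [ncard_pair (Sum.inl_injective.ne hab)] at this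
  omega

end PrimeExtension

section Existence

variable [Fintype V]

lemma hasPrimeExtension_one_of_splitsModulesIn (h3 : 3 ≤ Fintype.card V)
    (hS : G.SplitsModulesIn univ S) (hS' : G.ExtendsNoModule S) : G.HasPrimeExtension 1 :=
  ⟨_, isExtension_addVertex, isPrimeGraph_addVertex h3 hS hS'⟩

theorem HasSmallHomogeneousModules.hasPrimeExtension_one (hG : G.HasSmallHomogeneousModules)
    (hI : G.isolatedSet.Subsingleton) (hIc : Gᶜ.isolatedSet.Subsingleton) (hM : G.IsModule M)
    (hnt : M.Nontrivial) (hMu : M ≠ univ) : G.HasPrimeExtension 1 := by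
  have h3 : 3 ≤ Fintype.card V := by
    have h2 := one_lt_ncard_iff_nontrivial.mpr hnt
    have := ncard_lt_card hMu
    rw [Nat.card_eq_fintype_card] at this
    omega
  obtain ⟨σ, hσ⟩ := hG.exists_locallySplits
  by_cases hc : G.Preconnected
  · by_cases hcc : Gᶜ.Preconnected
    · obtain ⟨S, hS, hS'⟩ := exists_neighborhood_of_preconnected hc hcc hσ hM hnt hMu
      exact hasPrimeExtension_one_of_splitsModulesIn h3 hS hS'
    · obtain ⟨S, hS, hS'⟩ :=
        exists_neighborhood_of_not_preconnected hcc (locallySplits_compl_iff.mpr hσ) hIc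
      exact hasPrimeExtension_compl_iff.mp (hasPrimeExtension_one_of_splitsModulesIn h3 hS hS')
  · obtain ⟨S, hS, hS'⟩ := exists_neighborhood_of_not_preconnected hc hσ hI
    exact hasPrimeExtension_one_of_splitsModulesIn h3 hS hS'

lemma HasSmallHomogeneousModules.addVertex_singleton (hG : G.HasSmallHomogeneousModules)
    {a : V} (ha : a ∈ G.isolatedSet) : (G.addVertex {a}).HasSmallHomogeneousModules := by
  intro M hM hMh
  by_cases hw : Sum.inr 0 ∈ M
  · by_contra h3
    have h2 : 1 < (M \ {.inr 0}).ncard := by rw [ncard_sdiff_singleton_of_mem hw]; omega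
    obtain ⟨p, q, ⟨hpM, hpw⟩, ⟨hqM, hqw⟩, hpq⟩ := (one_lt_ncard_iff (toFinite _)).mp h2
    obtain ⟨p, rfl⟩ := exists_eq_inl_of_ne_inr hpw
    obtain ⟨q, rfl⟩ := exists_eq_inl_of_ne_inr hqw
    rcases hMh with hcl | hind
    · -- the only neighbour of the new vertex is `a`
      have hp : p = a := hcl hw hpM Sum.inr_ne_inl
      have hq : q = a := hcl hw hqM Sum.inr_ne_inl
      exact hpq (by rw [hp, hq])
    · -- `a` sees the new vertex of `M`, hence all of `M`
      have haM : Sum.inl a ∉ M := fun h => hind h hw Sum.inl_ne_inr rfl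
      exact ha p ((hM _ haM).resolve_right (fun h => h _ hw rfl) _ hpM)
  · rw [← image_inl_preimage_of_inr_notMem hw, ncard_image_of_injective _ Sum.inl_injective]
    exact hG _ (hM.preimage_inl isExtension_addVertex) (hMh.imp
      (fun h _ hu _ hv huv => h hu hv (Sum.inl_injective.ne huv))
      (fun h _ hu _ hv huv => h hu hv (Sum.inl_injective.ne huv)))

lemma hasPrimeExtension_two_of_isPrimeGraph {T : Set (V ⊕ Fin 1)}
    (h : ((G.addVertex S).addVertex T).IsPrimeGraph) : G.HasPrimeExtension 2 :=
  ⟨_, fun _ _ => Iff.rfl, h.comap_equiv ((Equiv.sumCongr (Equiv.refl V) finSumFinEquiv.symm).trans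
    (Equiv.sumAssoc V (Fin 1) (Fin 1)).symm)⟩

theorem HasSmallHomogeneousModules.hasPrimeExtension_two (hG : G.HasSmallHomogeneousModules)
    (hI : G.isolatedCount = 2) : G.HasPrimeExtension 2 := by
  rw [isolatedCount_eq_ncard] at hI
  obtain ⟨a, b, hab, hIab⟩ := ncard_eq_two.mp hI
  have ha : a ∈ G.isolatedSet := by rw [hIab]; exact mem_insert a _
  have hb : b ∈ G.isolatedSet := by rw [hIab]; exact mem_insert_of_mem a rfl
  set G₁ := G.addVertex {a}
  have hb₁ : Sum.inl b ∈ G₁.isolatedSet := by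
    rintro (u | i) h
    exacts [hb u h, hab.symm h]
  have hI₁ : G₁.isolatedSet ⊆ {Sum.inl b} := by
    rintro (u | i) hu
    · have hu' : u ∈ G.isolatedSet := fun w h => hu (.inl w) h
      rw [hIab] at hu'
      rcases hu' with rfl | rfl
      · exact (hu (.inr 0) rfl).elim
      · rfl
    · exact (hu (.inl a) rfl).elim
  have hc₁ : ¬ G₁.Preconnected := fun h =>
    Sum.inr_ne_inl (eq_of_reachable_of_mem_isolatedSet hb₁ (h _ (.inr 0)))
  have h3 : 3 ≤ Fintype.card (V ⊕ Fin 1) := by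
    have : 1 < Fintype.card V := Fintype.one_lt_card_iff.mpr ⟨a, b, hab⟩
    simp only [Fintype.card_sum, Fintype.card_fin]
    omega
  obtain ⟨σ, hσ⟩ := (hG.addVertex_singleton ha).exists_locallySplits
  obtain ⟨S, hS, hS'⟩ :=
    exists_neighborhood_of_not_preconnected hc₁ hσ (subsingleton_singleton.anti hI₁)
  exact hasPrimeExtension_two_of_isPrimeGraph (isPrimeGraph_addVertex h3 hS hS')

lemma HasSmallHomogeneousModules.primeBound_eq_two (hG : G.HasSmallHomogeneousModules)
    (h0 : ¬ G.HasPrimeExtension 0) (hI : G.isolatedCount = 2) : G.primeBound = 2 :=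
  primeBound_eq (hG.hasPrimeExtension_two hI) fun q hq => by
    interval_cases q
    exacts [h0, not_hasPrimeExtension_one hI]

end Existence

section ModularNumbers

variable [Fintype V]

lemma bddAbove_modularCliqueSizes (G : SimpleGraph V) :
    BddAbove {n : ℕ | ∃ M : Set V, G.IsModule M ∧ G.IsClique M ∧ M.ncard = n} :=
  ⟨Nat.card V, by rintro _ ⟨M, -, -, rfl⟩; exact ncard_le_card M⟩

lemma IsModule.ncard_le_modularCliqueNumber (hM : G.IsModule M) (hcl : G.IsClique M) :
    M.ncard ≤ G.modularCliqueNumber :=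
  le_csSup (bddAbove_modularCliqueSizes G) ⟨M, hM, hcl, rfl⟩

lemma exists_isModule_ncard_eq_modularCliqueNumber (G : SimpleGraph V) :
    ∃ M, G.IsModule M ∧ G.IsClique M ∧ M.ncard = G.modularCliqueNumber :=
  Nat.sSup_mem (s := {n | ∃ M : Set V, G.IsModule M ∧ G.IsClique M ∧ M.ncard = n})
    ⟨0, ∅, fun _ _ => Or.inr fun _ h => h.elim, isClique_empty, ncard_empty V⟩
    (bddAbove_modularCliqueSizes G)

lemma hasSmallHomogeneousModules_of_max_le
    (h : max G.modularStabilityNumber G.modularCliqueNumber ≤ 2) :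
    G.HasSmallHomogeneousModules := by
  rintro M hM (hcl | hind)
  · exact (hM.ncard_le_modularCliqueNumber hcl).trans (le_of_max_le_right h)
  · exact (hM.compl.ncard_le_modularCliqueNumber ((isClique_compl G).2 hind)).trans
      (le_of_max_le_left h)

lemma exists_isModule_ncard_eq_two (h : max G.modularStabilityNumber G.modularCliqueNumber = 2) :
    ∃ M, G.IsModule M ∧ M.ncard = 2 := by
  rcases max_choice G.modularStabilityNumber G.modularCliqueNumber with h' | h'
  · obtain ⟨M, hM, -, hM2⟩ := Gᶜ.exists_isModule_ncard_eq_modularCliqueNumber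
    exact ⟨M, isModule_compl_iff.mp hM, hM2.trans (h'.symm.trans h)⟩
  · obtain ⟨M, hM, -, hM2⟩ := G.exists_isModule_ncard_eq_modularCliqueNumber
    exact ⟨M, hM, hM2.trans (h'.symm.trans h)⟩

end ModularNumbers

end SimpleGraph

open SimpleGraph

/-- when `max(α_M(G), ω_M(G)) = 2`, `p(G) = 2` iff `G` or its complement
has exactly 2 isolated vertices; otherwise `p(G) = 1`. -/
theorem primeBound_of_max_eq_two {V : Type*} [Fintype V] (G : SimpleGraph V)
    (h : max G.modularStabilityNumber G.modularCliqueNumber = 2) :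
    (G.primeBound = 2 ↔ G.isolatedCount = 2 ∨ Gᶜ.isolatedCount = 2) ∧
    (¬ (G.isolatedCount = 2 ∨ Gᶜ.isolatedCount = 2) → G.primeBound = 1) := by
  have hG := hasSmallHomogeneousModules_of_max_le h.le
  obtain ⟨M, hM, hM2⟩ := exists_isModule_ncard_eq_two h
  have h0 := not_hasPrimeExtension_zero hM hM2
  by_cases hiso : G.isolatedCount = 2 ∨ Gᶜ.isolatedCount = 2
  · have h2 : G.primeBound = 2 := by
      rcases hiso with hI | hI
      · exact hG.primeBound_eq_two h0 hI
      · rw [← primeBound_compl]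
        exact hG.compl.primeBound_eq_two (hasPrimeExtension_compl_iff.not.mpr h0) hI
    exact ⟨iff_of_true h2 hiso, fun h => (h hiso).elim⟩
  have hMu : M ≠ univ := fun hMu => hiso (isolatedCount_eq_two_of_ncard_univ (hMu ▸ hM2))
  push Not at hiso
  have h1 : G.primeBound = 1 := primeBound_eq
    (hG.hasPrimeExtension_one (hG.isolatedSet_subsingleton hiso.1)
      (hG.compl.isolatedSet_subsingleton hiso.2) hM (one_lt_ncard_iff_nontrivial.mp (by omega))
      hMu)
    fun q hq => Nat.lt_one_iff.mp hq ▸ h0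
  exact ⟨iff_of_false (by omega) (by omega), fun _ => h1⟩
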